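/- arXiv:2002.03430 — 4 statements merged into one kernel-verified Lean document; each statement's English description precedes it below -/
import Mathlib

section
/- For every $w \in \mathbb{C}$, the integral $\int_{|z|>1} \left|\frac{w^2}{z^2(w-z)}\right| \, d\sigma_z$ (with respect to planar Lebesgue measure $\sigma$) is finite and satisfies the bound $\int_{|z|>1} \left|\frac{w^2}{z^2(w-z)}\right| d\sigma_z \le C\,|w|\,(1+\ln^+|w|)$ for some absolute constant $C>0$ independent of $w$, where $\ln^+ t = \max\{0, \ln t\}$. -/
/-!
Cover `{1 < ‖z‖}` by three regions: the disc `‖z - w‖ < ‖w‖ / 2`, where `‖z‖ ≥ ‖w‖ / 2` and the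
kernel is at most `4 / ‖z - w‖`; the annulus `1 < ‖z‖ ≤ T := max 1 (2‖w‖)` off that disc, where it
is at most `2‖w‖ / ‖z‖²`; and `‖z‖ > T`, where `‖w - z‖ ≥ ‖z‖ / 2` and it is at most
`2‖w‖² / ‖z‖³`. In polar coordinates these majorants integrate to `2π‖w‖`, `4π‖w‖ log T` and
`4π‖w‖² / T ≤ 2π‖w‖`, and `log T ≤ 1 + log⁺ ‖w‖`.
-/

open MeasureTheory Real Set

lemma mul_inv_pow_three_eq_rpow {y : ℝ} (hy : 0 < y) : y * (y ^ 3)⁻¹ = y ^ (-2 : ℝ) := by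
  rw [rpow_neg hy.le, rpow_two]
  field_simp

namespace Complex

variable {s : Set ℝ} {g : ℝ → ℝ}

private lemma pow_finrank_sub_one_smul_indicator (s : Set ℝ) (g : ℝ → ℝ) :
    (fun y => y ^ (Module.finrank ℝ ℂ - 1) • s.indicator g y) = s.indicator (fun y => y * g y) := by
  ext y
  simp [finrank_real_complex, indicator_mul_right]

lemma integrable_indicator_comp_norm_iff (hs : MeasurableSet s) (hs₀ : s ⊆ Ioi 0) :
    Integrable (fun z : ℂ => s.indicator g ‖z‖) ↔ IntegrableOn (fun y => y * g y) s := by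
  rw [integrable_fun_norm_addHaar, pow_finrank_sub_one_smul_indicator,
    integrableOn_indicator_iff hs, inter_eq_left.mpr hs₀]

lemma integral_indicator_comp_norm (hs : MeasurableSet s) (hs₀ : s ⊆ Ioi 0) :
    ∫ z : ℂ, s.indicator g ‖z‖ = 2 * π * ∫ y in s, y * g y := by
  rw [integral_fun_norm_addHaar, pow_finrank_sub_one_smul_indicator, setIntegral_indicator hs,
    inter_eq_right.mpr hs₀, finrank_real_complex, measureReal_def, volume_ball]
  simp [NNReal.coe_real_pi]
  ring

lemma integrable_indicator_Ioo_inv_norm (R : ℝ) :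
    Integrable (fun z : ℂ => (Ioo 0 R).indicator (·⁻¹) ‖z‖) := by
  rw [integrable_indicator_comp_norm_iff measurableSet_Ioo Ioo_subset_Ioi_self]
  refine (integrableOn_const (C := (1 : ℝ)) measure_Ioo_lt_top.ne).congr_fun
    (fun y hy => (mul_inv_cancel₀ hy.1.ne').symm) measurableSet_Ioo

lemma integral_indicator_Ioo_inv_norm {R : ℝ} (hR : 0 ≤ R) :
    ∫ z : ℂ, (Ioo 0 R).indicator (·⁻¹) ‖z‖ = 2 * π * R := by
  rw [integral_indicator_comp_norm measurableSet_Ioo Ioo_subset_Ioi_self,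
    setIntegral_congr_fun measurableSet_Ioo fun y hy => mul_inv_cancel₀ hy.1.ne']
  simp [hR]

lemma integrable_indicator_Ioc_inv_sq_norm (T : ℝ) :
    Integrable (fun z : ℂ => (Ioc 1 T).indicator (fun y => (y ^ 2)⁻¹) ‖z‖) := by
  rw [integrable_indicator_comp_norm_iff measurableSet_Ioc
    fun y hy => zero_lt_one.trans hy.1]
  refine ContinuousOn.integrableOn_Icc ?_ |>.mono_set Ioc_subset_Icc_self
  exact continuousOn_id.mul ((continuousOn_pow 2).inv₀ fun y hy => by
    have := hy.1; positivity)

lemma integral_indicator_Ioc_inv_sq_norm {T : ℝ} (hT : 1 ≤ T) :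
    ∫ z : ℂ, (Ioc 1 T).indicator (fun y => (y ^ 2)⁻¹) ‖z‖ = 2 * π * Real.log T := by
  rw [integral_indicator_comp_norm measurableSet_Ioc fun y hy => zero_lt_one.trans hy.1,
    setIntegral_congr_fun measurableSet_Ioc fun y hy => show y * (y ^ 2)⁻¹ = y⁻¹ by
      have := (zero_lt_one.trans hy.1).ne'; field_simp,
    ← intervalIntegral.integral_of_le hT, integral_inv (by simp [hT]), div_one]

lemma integrable_indicator_Ioi_inv_cube_norm {T : ℝ} (hT : 0 < T) :
    Integrable (fun z : ℂ => (Ioi T).indicator (fun y => (y ^ 3)⁻¹) ‖z‖) := by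
  rw [integrable_indicator_comp_norm_iff measurableSet_Ioi (Ioi_subset_Ioi hT.le)]
  exact (integrableOn_Ioi_rpow_of_lt (by norm_num) hT).congr_fun
    (fun y hy => (mul_inv_pow_three_eq_rpow (hT.trans hy)).symm) measurableSet_Ioi

lemma integral_indicator_Ioi_inv_cube_norm {T : ℝ} (hT : 0 < T) :
    ∫ z : ℂ, (Ioi T).indicator (fun y => (y ^ 3)⁻¹) ‖z‖ = 2 * π * T⁻¹ := by
  rw [integral_indicator_comp_norm measurableSet_Ioi (Ioi_subset_Ioi hT.le),
    setIntegral_congr_fun measurableSet_Ioi fun y hy => mul_inv_pow_three_eq_rpow (hT.trans hy),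
    integral_Ioi_rpow_of_lt (by norm_num) hT]
  norm_num [rpow_neg_one]

end Complex

open Complex

/-- The majorant of the kernel, written in terms of `a = ‖w‖`, `r = ‖z‖` and `d = ‖z - w‖`. -/
noncomputable def kernelMajorant (a T r d : ℝ) : ℝ :=
  4 * (Ioo 0 (a / 2)).indicator (·⁻¹) d + 2 * a * (Ioc 1 T).indicator (fun y => (y ^ 2)⁻¹) r
    + 2 * a ^ 2 * (Ioi T).indicator (fun y => (y ^ 3)⁻¹) r

section kernelMajorant

variable {a T r d : ℝ}

lemma kernelMajorant_nonneg (ha : 0 ≤ a) (hr : 0 ≤ r) (hd : 0 ≤ d) (T : ℝ) :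
    0 ≤ kernelMajorant a T r d := by
  have h₁ : 0 ≤ (Ioo 0 (a / 2)).indicator (·⁻¹) d := indicator_apply_nonneg fun _ => by positivity
  have h₂ : 0 ≤ (Ioc 1 T).indicator (fun y => (y ^ 2)⁻¹) r :=
    indicator_apply_nonneg fun _ => by positivity
  have h₃ : 0 ≤ (Ioi T).indicator (fun y => (y ^ 3)⁻¹) r :=
    indicator_apply_nonneg fun _ => by positivity
  unfold kernelMajorant
  positivity

/-- The triangle inequalities `a ≤ r + d` and `r ≤ a + d` give `r ≥ a / 2` when `d < a / 2`, and
`d ≥ r / 2` when `r > T ≥ 2 a`. -/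
lemma sq_div_le_kernelMajorant (ha : 0 ≤ a) (hT : 2 * a ≤ T) (hr : 1 < r) (hd : 0 ≤ d)
    (har : a ≤ r + d) (hra : r ≤ a + d) : a ^ 2 / (r ^ 2 * d) ≤ kernelMajorant a T r d := by
  have hr₀ : 0 < r := zero_lt_one.trans hr
  have h₁ : 0 ≤ (Ioo 0 (a / 2)).indicator (·⁻¹) d := indicator_apply_nonneg fun _ => by positivity
  have h₂ : 0 ≤ (Ioc 1 T).indicator (fun y => (y ^ 2)⁻¹) r :=
    indicator_apply_nonneg fun _ => by positivity
  have h₃ : 0 ≤ (Ioi T).indicator (fun y => (y ^ 3)⁻¹) r :=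
    indicator_apply_nonneg fun _ => by positivity
  unfold kernelMajorant
  rcases hd.eq_or_lt with rfl | hd
  · rw [mul_zero, div_zero]
    positivity
  by_cases hnear : d < a / 2
  · have : a ^ 2 / (r ^ 2 * d) ≤ 4 * d⁻¹ := by
      rw [div_le_iff₀ (by positivity)]
      field_simp
      nlinarith
    rw [indicator_of_mem (show d ∈ Ioo 0 (a / 2) from ⟨hd, hnear⟩)]
    linarith [mul_nonneg ha h₂, mul_nonneg (sq_nonneg a) h₃]
  by_cases hmid : r ≤ T
  · have : a ^ 2 / (r ^ 2 * d) ≤ 2 * a * (r ^ 2)⁻¹ := by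
      rw [div_le_iff₀ (by positivity)]
      field_simp
      nlinarith
    rw [indicator_of_mem (show r ∈ Ioc 1 T from ⟨hr, hmid⟩)]
    linarith [mul_nonneg ha h₂, mul_nonneg (sq_nonneg a) h₃]
  · have : a ^ 2 / (r ^ 2 * d) ≤ 2 * a ^ 2 * (r ^ 3)⁻¹ := by
      rw [div_le_iff₀ (by positivity)]
      field_simp
      nlinarith
    rw [indicator_of_mem (show r ∈ Ioi T from not_le.mp hmid)]
    linarith [mul_nonneg ha h₂, mul_nonneg (sq_nonneg a) h₃]

lemma log_max_one_two_mul_le (ha : 0 ≤ a) :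
    Real.log (max 1 (2 * a)) ≤ 1 + max 0 (Real.log a) := by
  have hlog₂ : Real.log 2 ≤ 1 := (log_le_sub_one_of_pos two_pos).trans (by norm_num)
  rcases le_total (2 * a) 1 with h | h
  · rw [max_eq_left h, Real.log_one]
    positivity
  · have ha₀ : a ≠ 0 := by rintro rfl; norm_num at h
    rw [max_eq_right h, Real.log_mul two_ne_zero ha₀]
    linarith [le_max_right 0 (Real.log a)]

end kernelMajorant

section integral

variable (w : ℂ) {T : ℝ}

lemma integrable_kernelMajorant (hT : 0 < T) :
    Integrable fun z : ℂ => kernelMajorant ‖w‖ T ‖z‖ ‖z - w‖ :=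
  (((integrable_indicator_Ioo_inv_norm _).comp_sub_right w).const_mul 4 |>.add
    ((integrable_indicator_Ioc_inv_sq_norm T).const_mul _)).add
    ((integrable_indicator_Ioi_inv_cube_norm hT).const_mul _)

lemma integral_kernelMajorant (hT : 1 ≤ T) :
    ∫ z : ℂ, kernelMajorant ‖w‖ T ‖z‖ ‖z - w‖
      = 4 * π * ‖w‖ * (1 + Real.log T + ‖w‖ / T) := by
  have hT₀ : 0 < T := zero_lt_one.trans_le hT
  have h₁ : Integrable fun z : ℂ => 4 * (Ioo 0 (‖w‖ / 2)).indicator (·⁻¹) ‖z - w‖ :=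
    ((integrable_indicator_Ioo_inv_norm _).comp_sub_right w).const_mul 4
  have h₂ : Integrable fun z : ℂ => 2 * ‖w‖ * (Ioc 1 T).indicator (fun y => (y ^ 2)⁻¹) ‖z‖ :=
    (integrable_indicator_Ioc_inv_sq_norm T).const_mul _
  have h₃ : Integrable fun z : ℂ => 2 * ‖w‖ ^ 2 * (Ioi T).indicator (fun y => (y ^ 3)⁻¹) ‖z‖ :=
    (integrable_indicator_Ioi_inv_cube_norm hT₀).const_mul _
  unfold kernelMajorant
  rw [integral_add (by exact h₁.add h₂) h₃, integral_add h₁ h₂,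
    integral_const_mul, integral_const_mul, integral_const_mul,
    integral_sub_right_eq_self (fun z : ℂ => (Ioo 0 (‖w‖ / 2)).indicator (·⁻¹) ‖z‖) w,
    integral_indicator_Ioo_inv_norm (by positivity), integral_indicator_Ioc_inv_sq_norm hT,
    integral_indicator_Ioi_inv_cube_norm hT₀]
  ring

lemma integral_kernelMajorant_le :
    ∫ z : ℂ, kernelMajorant ‖w‖ (max 1 (2 * ‖w‖)) ‖z‖ ‖z - w‖
      ≤ 10 * π * ‖w‖ * (1 + max 0 (Real.log ‖w‖)) := by
  have hT := le_max_right 1 (2 * ‖w‖)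
  have hdiv : ‖w‖ / max 1 (2 * ‖w‖) ≤ 1 / 2 := by
    rw [div_le_iff₀ (zero_lt_one.trans_le (le_max_left _ _))]
    linarith
  have hlog := log_max_one_two_mul_le (norm_nonneg w)
  rw [integral_kernelMajorant w (le_max_left _ _)]
  have : 1 + Real.log (max 1 (2 * ‖w‖)) + ‖w‖ / max 1 (2 * ‖w‖)
      ≤ 5 / 2 * (1 + max 0 (Real.log ‖w‖)) := by
    linarith [le_max_left 0 (Real.log ‖w‖)]
  calc 4 * π * ‖w‖ * (1 + Real.log (max 1 (2 * ‖w‖)) + ‖w‖ / max 1 (2 * ‖w‖))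
      ≤ 4 * π * ‖w‖ * (5 / 2 * (1 + max 0 (Real.log ‖w‖))) := by gcongr
    _ = 10 * π * ‖w‖ * (1 + max 0 (Real.log ‖w‖)) := by ring

end integral

/-- For every `w ∈ ℂ`, the integral `∫_{|z|>1} |w² / (z²(w-z))| dσ_z` (planar Lebesgue
measure) is finite and bounded by `C·|w|·(1 + ln⁺|w|)` for an absolute constant `C > 0`. -/
theorem stmt0 :
    ∃ C : ℝ, 0 < C ∧ ∀ w : ℂ,
      IntegrableOn (fun z : ℂ => ‖w ^ 2 / (z ^ 2 * (w - z))‖) {z : ℂ | 1 < ‖z‖} volume ∧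
      (∫ z in {z : ℂ | 1 < ‖z‖}, ‖w ^ 2 / (z ^ 2 * (w - z))‖ ∂volume)
        ≤ C * ‖w‖ * (1 + max 0 (Real.log ‖w‖)) := by
  refine ⟨10 * π, by positivity, fun w => ?_⟩
  set M := fun z : ℂ => kernelMajorant ‖w‖ (max 1 (2 * ‖w‖)) ‖z‖ ‖z - w‖
  have hS : MeasurableSet {z : ℂ | 1 < ‖z‖} := measurableSet_lt measurable_const measurable_norm
  have hM : Integrable M := integrable_kernelMajorant w (zero_lt_one.trans_le (le_max_left _ _))
  have hle : ∀ z ∈ {z : ℂ | 1 < ‖z‖}, ‖w ^ 2 / (z ^ 2 * (w - z))‖ ≤ M z := fun z hz => by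
    rw [norm_div, norm_mul, norm_pow, norm_pow, norm_sub_rev]
    exact sq_div_le_kernelMajorant (norm_nonneg w) (le_max_right _ _) hz (norm_nonneg _)
      (by linarith [norm_sub_norm_le w z, norm_sub_rev w z]) (by linarith [norm_sub_norm_le z w])
  have hint : IntegrableOn (fun z : ℂ => ‖w ^ 2 / (z ^ 2 * (w - z))‖) {z : ℂ | 1 < ‖z‖} :=
    hM.integrableOn.mono' (by fun_prop : Measurable _).aestronglyMeasurable <|
      (ae_restrict_iff' hS).mpr <| .of_forall fun z hz => by simpa using hle z hz
  refine ⟨hint, ?_⟩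
  calc (∫ z in {z : ℂ | 1 < ‖z‖}, ‖w ^ 2 / (z ^ 2 * (w - z))‖)
      ≤ ∫ z in {z : ℂ | 1 < ‖z‖}, M z := setIntegral_mono_on hint hM.integrableOn hS hle
    _ ≤ ∫ z, M z := setIntegral_le_integral hM <| .of_forall fun z =>
        kernelMajorant_nonneg (norm_nonneg w) (norm_nonneg z) (norm_nonneg _) _
    _ ≤ 10 * π * ‖w‖ * (1 + max 0 (Real.log ‖w‖)) := integral_kernelMajorant_le w
end

section
/- Let $\mu$ be a finite complex Borel measure on $\mathbb{C}$ satisfying $\int_{|z|>10} |z|\log|z| \, d|\mu|(z) < \infty$. Then the function $\tilde H(z) = \int \frac{w^2}{z^2(w-z)} d\mu(w)$ is absolutely integrable with respect to planar Lebesgue measure on $\{|z|>1\}$. -/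
/-!
By Tonelli it suffices to bound, for each `w`, the integral of
`|w|² / (|z|² |z - w|)` over `|z| > 1` by a multiple of `|w| (1 + log (1 + 2|w|))`, which is
`|μ|`-integrable under the moment hypothesis. Where `|z| ≥ 2|w|` the integrand is at most
`2|w|² / |z|³`, contributing `2π|w|`. Where `|z| < 2|w|`, the inequality
`|w|² ≤ 2|z|² + 2|z - w|²` bounds it by `2 / |z - w| + 6|w| / |z|²`; integrating over the disc
`|z - w| < 3|w|` and the annulus `1 < |z| < 1 + 2|w|` gives `12π|w|` and `12π|w| log (1 + 2|w|)`.
This logarithm is what the `|w| log |w|` moment pays for.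
-/

open MeasureTheory Real Set

theorem Complex.lintegral_comp_norm (f : ℝ → ENNReal) (hf : Measurable f) :
    ∫⁻ z : ℂ, f ‖z‖ = ENNReal.ofReal (2 * π) * ∫⁻ r in Ioi 0, ENNReal.ofReal r * f r := by
  simp_rw [← Complex.lintegral_comp_polarCoord_symm, norm_polarCoord_symm, polarCoord_target,
    Measure.volume_eq_prod, ← Measure.prod_restrict]
  rw [lintegral_prod _ (by fun_prop), ← lintegral_const_mul _ (by fun_prop)]
  refine setLIntegral_congr_fun measurableSet_Ioi fun r (hr : 0 < r) => ?_
  simp only [smul_eq_mul, abs_of_pos hr, lintegral_const, Measure.restrict_apply MeasurableSet.univ,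
    univ_inter, volume_Ioo]
  ring_nf

theorem Complex.setLIntegral_comp_norm {s : Set ℝ} (hs : MeasurableSet s) (f : ℝ → ENNReal)
    (hf : Measurable f) :
    ∫⁻ z in {z : ℂ | ‖z‖ ∈ s}, f ‖z‖
      = ENNReal.ofReal (2 * π) * ∫⁻ r in s ∩ Ioi 0, ENNReal.ofReal r * f r := by
  rw [← lintegral_indicator (s := {z : ℂ | ‖z‖ ∈ s}) (measurable_norm hs),
    ← Measure.restrict_restrict hs, ← lintegral_indicator hs]
  simp_rw [indicator_mul_right]
  exact Complex.lintegral_comp_norm _ (hf.indicator hs)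

theorem Complex.setLIntegral_ball_inv_norm_sub (w : ℂ) (R : ℝ) :
    ∫⁻ z in Metric.ball w R, ENNReal.ofReal ‖z - w‖⁻¹ = ENNReal.ofReal (2 * π * R) := by
  have hball : Metric.ball (0 : ℂ) R = {z | ‖z‖ ∈ Iio R} := by ext; simp
  calc ∫⁻ z in Metric.ball w R, ENNReal.ofReal ‖z - w‖⁻¹
      = ∫⁻ z, (Metric.ball 0 R).indicator (fun z => ENNReal.ofReal ‖z‖⁻¹) (z - w) := by
        rw [← lintegral_indicator measurableSet_ball]
        congr 1 with z
        simp [indicator, dist_eq_norm]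
    _ = ∫⁻ z in {z : ℂ | ‖z‖ ∈ Iio R}, ENNReal.ofReal ‖z‖⁻¹ := by
        rw [lintegral_sub_right_eq_self (fun z => (Metric.ball 0 R).indicator _ z),
          lintegral_indicator measurableSet_ball, hball]
    _ = ENNReal.ofReal (2 * π) * ∫⁻ r in Ioo 0 R, 1 := by
        rw [Complex.setLIntegral_comp_norm measurableSet_Iio (fun r => ENNReal.ofReal r⁻¹)
          (by fun_prop), Iio_inter_Ioi]
        congr 1
        refine setLIntegral_congr_fun measurableSet_Ioo fun r hr => ?_
        rw [← ENNReal.ofReal_mul hr.1.le, mul_inv_cancel₀ hr.1.ne', ENNReal.ofReal_one]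
    _ = ENNReal.ofReal (2 * π * R) := by
        rw [setLIntegral_one, volume_Ioo, sub_zero, ← ENNReal.ofReal_mul (by positivity)]

theorem Complex.setLIntegral_annulus_inv_norm_sq {b : ℝ} (hb : 1 ≤ b) :
    ∫⁻ z in {z : ℂ | ‖z‖ ∈ Ioo 1 b}, ENNReal.ofReal (‖z‖ ^ 2)⁻¹
      = ENNReal.ofReal (2 * π * Real.log b) := by
  rw [Complex.setLIntegral_comp_norm measurableSet_Ioo (fun r => ENNReal.ofReal (r ^ 2)⁻¹)
    (by fun_prop), Ioo_inter_Ioi, max_eq_left zero_le_one, Measure.restrict_congr_set Ioo_ae_eq_Ioc]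
  have hint : IntegrableOn (fun r : ℝ => r⁻¹) (Ioc 1 b) :=
    (intervalIntegrable_inv_iff.2 (Or.inr fun h => by simp [uIcc_of_le hb] at h; linarith)).1
  calc ENNReal.ofReal (2 * π) * ∫⁻ r in Ioc 1 b, ENNReal.ofReal r * ENNReal.ofReal (r ^ 2)⁻¹
      = ENNReal.ofReal (2 * π) * ∫⁻ r in Ioc 1 b, ENNReal.ofReal r⁻¹ := by
        congr 1
        refine setLIntegral_congr_fun measurableSet_Ioc fun r hr => ?_
        rw [← ENNReal.ofReal_mul (zero_le_one.trans hr.1.le)]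
        field_simp
    _ = ENNReal.ofReal (2 * π) * ENNReal.ofReal (∫ r in (1)..b, r⁻¹) := by
        rw [intervalIntegral.integral_of_le hb, ofReal_integral_eq_lintegral_ofReal hint
          ((ae_restrict_mem measurableSet_Ioc).mono fun r hr =>
            inv_nonneg.2 (zero_le_one.trans hr.1.le))]
    _ = ENNReal.ofReal (2 * π * Real.log b) := by
        rw [integral_inv_of_pos one_pos (by linarith), div_one,
          ← ENNReal.ofReal_mul (by positivity)]

theorem Complex.setLIntegral_inv_norm_cube {a : ℝ} (ha : 0 < a) :
    ∫⁻ z in {z : ℂ | ‖z‖ ∈ Ici a}, ENNReal.ofReal (‖z‖ ^ 3)⁻¹ = ENNReal.ofReal (2 * π / a) := by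
  rw [Complex.setLIntegral_comp_norm measurableSet_Ici (fun r => ENNReal.ofReal (r ^ 3)⁻¹)
    (by fun_prop), inter_eq_left.mpr (Ici_subset_Ioi.mpr ha),
    Measure.restrict_congr_set Ioi_ae_eq_Ici.symm]
  calc ENNReal.ofReal (2 * π) * ∫⁻ r in Ioi a, ENNReal.ofReal r * ENNReal.ofReal (r ^ 3)⁻¹
      = ENNReal.ofReal (2 * π) * ∫⁻ r in Ioi a, ENNReal.ofReal (r ^ (-2 : ℝ)) := by
        congr 1
        refine setLIntegral_congr_fun measurableSet_Ioi fun r (hr : a < r) => ?_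
        have hr0 : 0 < r := ha.trans hr
        rw [← ENNReal.ofReal_mul hr0.le, rpow_neg hr0.le, rpow_two]
        field_simp
    _ = ENNReal.ofReal (2 * π) * ENNReal.ofReal (∫ r in Ioi a, r ^ (-2 : ℝ)) := by
        rw [ofReal_integral_eq_lintegral_ofReal (integrableOn_Ioi_rpow_of_lt (by norm_num) ha)
          ((ae_restrict_mem measurableSet_Ioi).mono fun r (hr : a < r) =>
            rpow_nonneg (ha.trans hr).le _)]
    _ = ENNReal.ofReal (2 * π / a) := by
        rw [integral_Ioi_rpow_of_lt (by norm_num) ha, ← ENNReal.ofReal_mul (by positivity)]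
        norm_num [div_eq_mul_inv, rpow_neg_one]
/-- `w² / (z² (w - z)) = 1 / (w - z) + 1 / z + w / z²`: the Cauchy kernel with its first two
terms at `∞` removed. -/
noncomputable def cauchyRemainderKernel (z w : ℂ) : ℂ := w ^ 2 / (z ^ 2 * (w - z))

namespace cauchyRemainderKernel

theorem norm_eq (z w : ℂ) :
    ‖cauchyRemainderKernel z w‖ = ‖w‖ ^ 2 / (‖z‖ ^ 2 * ‖z - w‖) := by
  rw [cauchyRemainderKernel, norm_div, norm_mul, norm_pow, norm_pow, norm_sub_rev]

theorem norm_le_of_norm_lt {z w : ℂ} (hz : ‖z‖ < 2 * ‖w‖) :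
    ‖cauchyRemainderKernel z w‖ ≤ 2 * ‖z - w‖⁻¹ + 6 * ‖w‖ * (‖z‖ ^ 2)⁻¹ := by
  rw [norm_eq]
  have hw : ‖w‖ ≤ ‖z‖ + ‖z - w‖ := norm_sub_rev w z ▸ norm_le_norm_add_norm_sub' w z
  have hzw : ‖z - w‖ ≤ 3 * ‖w‖ := by linarith [norm_sub_le z w]
  rcases (norm_nonneg z).eq_or_lt with hz0 | hz0
  · simp [← hz0]
  rcases (norm_nonneg (z - w)).eq_or_lt with hd0 | hd0
  · simp [← hd0]; positivity
  rw [div_le_iff₀ (by positivity)]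
  field_simp
  nlinarith [norm_nonneg w]

theorem norm_le_of_le_norm {z w : ℂ} (hz : 2 * ‖w‖ ≤ ‖z‖) :
    ‖cauchyRemainderKernel z w‖ ≤ 2 * ‖w‖ ^ 2 * (‖z‖ ^ 3)⁻¹ := by
  rw [norm_eq]
  rcases (norm_nonneg z).eq_or_lt with hz0 | hz0
  · simp [← hz0]
  have hd : ‖z‖ / 2 ≤ ‖z - w‖ := by linarith [norm_sub_norm_le z w]
  calc ‖w‖ ^ 2 / (‖z‖ ^ 2 * ‖z - w‖) ≤ ‖w‖ ^ 2 / (‖z‖ ^ 2 * (‖z‖ / 2)) := by gcongr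
    _ = 2 * ‖w‖ ^ 2 * (‖z‖ ^ 3)⁻¹ := by field_simp

theorem setLIntegral_near_le (w : ℂ) :
    ∫⁻ z in {z : ℂ | 1 < ‖z‖ ∧ ‖z‖ < 2 * ‖w‖}, ‖cauchyRemainderKernel z w‖ₑ
      ≤ ENNReal.ofReal (12 * π * (‖w‖ * (1 + Real.log (1 + 2 * ‖w‖)))) := by
  set A := {z : ℂ | 1 < ‖z‖ ∧ ‖z‖ < 2 * ‖w‖}
  have hlog : 0 ≤ Real.log (1 + 2 * ‖w‖) := Real.log_nonneg (by linarith [norm_nonneg w])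
  have hA : MeasurableSet A := by measurability
  have hball : A ⊆ Metric.ball w (3 * ‖w‖) := fun z hz => by
    rw [Metric.mem_ball, dist_eq_norm]; linarith [norm_sub_le z w, hz.2]
  have hannulus : A ⊆ {z : ℂ | ‖z‖ ∈ Ioo 1 (1 + 2 * ‖w‖)} := fun z hz => ⟨hz.1, by linarith [hz.2]⟩
  calc ∫⁻ z in A, ‖cauchyRemainderKernel z w‖ₑ
      ≤ ∫⁻ z in A, ENNReal.ofReal 2 * ENNReal.ofReal ‖z - w‖⁻¹
          + ENNReal.ofReal (6 * ‖w‖) * ENNReal.ofReal (‖z‖ ^ 2)⁻¹ := by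
        refine setLIntegral_mono' hA fun z hz => ?_
        rw [← ofReal_norm, ← ENNReal.ofReal_mul (by norm_num),
          ← ENNReal.ofReal_mul (by positivity),
          ← ENNReal.ofReal_add (by positivity) (by positivity)]
        exact ENNReal.ofReal_le_ofReal (norm_le_of_norm_lt hz.2)
    _ ≤ ENNReal.ofReal 2 * (∫⁻ z in Metric.ball w (3 * ‖w‖), ENNReal.ofReal ‖z - w‖⁻¹)
          + ENNReal.ofReal (6 * ‖w‖)
            * ∫⁻ z in {z : ℂ | ‖z‖ ∈ Ioo 1 (1 + 2 * ‖w‖)}, ENNReal.ofReal (‖z‖ ^ 2)⁻¹ := by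
        rw [lintegral_add_left (by fun_prop), lintegral_const_mul _ (by fun_prop),
          lintegral_const_mul _ (by fun_prop)]
        gcongr
    _ = ENNReal.ofReal (12 * π * (‖w‖ * (1 + Real.log (1 + 2 * ‖w‖)))) := by
        rw [Complex.setLIntegral_ball_inv_norm_sub,
          Complex.setLIntegral_annulus_inv_norm_sq (by linarith [norm_nonneg w]),
          ← ENNReal.ofReal_mul (by norm_num), ← ENNReal.ofReal_mul (by positivity),
          ← ENNReal.ofReal_add (by positivity) (by positivity)]
        ring_nf

theorem setLIntegral_far_le (w : ℂ) :
    ∫⁻ z in {z : ℂ | ‖z‖ ∈ Ici (2 * ‖w‖)}, ‖cauchyRemainderKernel z w‖ₑ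
      ≤ ENNReal.ofReal (2 * π * ‖w‖) := by
  rcases (norm_nonneg w).eq_or_lt with hw | hw
  · simp [cauchyRemainderKernel, norm_eq_zero.mp hw.symm]
  calc ∫⁻ z in {z : ℂ | ‖z‖ ∈ Ici (2 * ‖w‖)}, ‖cauchyRemainderKernel z w‖ₑ
      ≤ ∫⁻ z in {z : ℂ | ‖z‖ ∈ Ici (2 * ‖w‖)},
          ENNReal.ofReal (2 * ‖w‖ ^ 2) * ENNReal.ofReal (‖z‖ ^ 3)⁻¹ := by
        refine setLIntegral_mono' (measurable_norm measurableSet_Ici) fun z hz => ?_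
        rw [← ofReal_norm, ← ENNReal.ofReal_mul (by positivity)]
        exact ENNReal.ofReal_le_ofReal (norm_le_of_le_norm hz)
    _ = ENNReal.ofReal (2 * π * ‖w‖) := by
        rw [lintegral_const_mul _ (by fun_prop), Complex.setLIntegral_inv_norm_cube (by positivity),
          ← ENNReal.ofReal_mul (by positivity)]
        congr 1
        field_simp

theorem setLIntegral_le (w : ℂ) :
    ∫⁻ z in {z : ℂ | 1 < ‖z‖}, ‖cauchyRemainderKernel z w‖ₑ
      ≤ ENNReal.ofReal (14 * π * (‖w‖ * (1 + Real.log (1 + 2 * ‖w‖)))) := by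
  have hlog : 0 ≤ Real.log (1 + 2 * ‖w‖) := Real.log_nonneg (by linarith [norm_nonneg w])
  have hcover : {z : ℂ | 1 < ‖z‖}
      ⊆ {z : ℂ | 1 < ‖z‖ ∧ ‖z‖ < 2 * ‖w‖} ∪ {z : ℂ | ‖z‖ ∈ Ici (2 * ‖w‖)} := fun z hz => by
    by_cases h : ‖z‖ < 2 * ‖w‖
    · exact Or.inl ⟨hz, h⟩
    · exact Or.inr (not_lt.mp h)
  calc ∫⁻ z in {z : ℂ | 1 < ‖z‖}, ‖cauchyRemainderKernel z w‖ₑ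
      ≤ ENNReal.ofReal (12 * π * (‖w‖ * (1 + Real.log (1 + 2 * ‖w‖))))
          + ENNReal.ofReal (2 * π * ‖w‖) :=
        (lintegral_mono_set hcover).trans <| (lintegral_union_le _ _ _).trans <|
          add_le_add (setLIntegral_near_le w) (setLIntegral_far_le w)
    _ ≤ ENNReal.ofReal (14 * π * (‖w‖ * (1 + Real.log (1 + 2 * ‖w‖)))) := by
        rw [← ENNReal.ofReal_add (by positivity) (by positivity)]
        refine ENNReal.ofReal_le_ofReal ?_
        nlinarith [pi_pos, norm_nonneg w, mul_nonneg (mul_nonneg pi_pos.le (norm_nonneg w)) hlog]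

end cauchyRemainderKernel

theorem integrable_norm_mul_one_add_log_of_integrableOn (ρ : Measure ℂ) [IsFiniteMeasure ρ]
    (hmu : IntegrableOn (fun w : ℂ => ‖w‖ * Real.log ‖w‖) {w : ℂ | 10 < ‖w‖} ρ) :
    Integrable (fun w : ℂ => ‖w‖ * (1 + Real.log (1 + 2 * ‖w‖))) ρ := by
  set A := {w : ℂ | 10 < ‖w‖}
  have hA : MeasurableSet A := measurableSet_lt measurable_const measurable_norm
  refine ((integrable_const (210 : ℝ)).add ((hmu.integrable_indicator hA).const_mul 3)).mono'
    (by fun_prop) (.of_forall fun w => ?_)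
  have hw := norm_nonneg w
  have hlog : 0 ≤ Real.log (1 + 2 * ‖w‖) := Real.log_nonneg (by linarith)
  rw [Real.norm_of_nonneg (by positivity)]
  by_cases hwA : w ∈ A
  · have hw10 : 10 < ‖w‖ := hwA
    have hlog_sq : Real.log (1 + 2 * ‖w‖) ≤ 2 * Real.log ‖w‖ := by
      rw [← Real.log_rpow (by linarith)]
      exact Real.log_le_log (by linarith) (by norm_num; nlinarith)
    have hlog_one : 1 ≤ Real.log ‖w‖ := by
      rw [Real.le_log_iff_exp_le (by linarith)]
      linarith [Real.exp_one_lt_d9]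
    simp only [Pi.add_apply, indicator_of_mem hwA]
    nlinarith
  · have hw10 : ‖w‖ ≤ 10 := not_lt.mp hwA
    have hlog_le : Real.log (1 + 2 * ‖w‖) ≤ 2 * ‖w‖ := by
      linarith [Real.log_le_sub_one_of_pos (by linarith : (0 : ℝ) < 1 + 2 * ‖w‖)]
    simp only [Pi.add_apply, indicator_of_notMem hwA, mul_zero, add_zero]
    nlinarith

/-- Let `μ` be a finite complex Borel measure on `ℂ`, represented by its polar decomposition
`dμ = g d ρ` where `ρ = |μ|` is a finite positive measure and `‖g‖ = 1`.  If
`∫_{|z|>10} |z| log|z| d|μ|(z) < ∞` then `H̃(z) = ∫ w²/(z²(w-z)) dμ(w)` is absolutely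
integrable on `{|z|>1}` with respect to planar Lebesgue measure. -/
theorem stmt1 (ρ : Measure ℂ) [IsFiniteMeasure ρ] (g : ℂ → ℂ)
    (hg_meas : Measurable g) (hg_norm : ∀ w, ‖g w‖ = 1)
    (hmu : IntegrableOn (fun w : ℂ => ‖w‖ * Real.log ‖w‖) {w : ℂ | 10 < ‖w‖} ρ) :
    IntegrableOn (fun z : ℂ => ∫ w, w ^ 2 / (z ^ 2 * (w - z)) * g w ∂ρ)
      {z : ℂ | 1 < ‖z‖} volume := by
  have hF : Integrable (fun p : ℂ × ℂ => cauchyRemainderKernel p.1 p.2 * g p.2)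
      ((volume.restrict {z : ℂ | 1 < ‖z‖}).prod ρ) := by
    refine ⟨by unfold cauchyRemainderKernel; fun_prop, ?_⟩
    rw [HasFiniteIntegral, lintegral_prod_symm _ (by unfold cauchyRemainderKernel; fun_prop)]
    calc ∫⁻ w, ∫⁻ z in {z : ℂ | 1 < ‖z‖}, ‖cauchyRemainderKernel z w * g w‖ₑ ∂volume ∂ρ
        = ∫⁻ w, ∫⁻ z in {z : ℂ | 1 < ‖z‖}, ‖cauchyRemainderKernel z w‖ₑ ∂volume ∂ρ := by
          simp_rw [← ofReal_norm, norm_mul, hg_norm, mul_one]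
      _ ≤ ∫⁻ w, ENNReal.ofReal (14 * π * (‖w‖ * (1 + Real.log (1 + 2 * ‖w‖)))) ∂ρ :=
          lintegral_mono fun w => cauchyRemainderKernel.setLIntegral_le w
      _ < ⊤ :=
          ((integrable_norm_mul_one_add_log_of_integrableOn ρ hmu).const_mul _).lintegral_lt_top
  exact hF.integral_prod_left
end

section
/- For constants $B \ge 0$ and $\gamma > 2$, the integral $\int_{U} \frac{du\,dv}{(u^2+v^2)^{3/2}}$ over the region $U = \{(u,v) \in \mathbb{R}^2 : 0 < u < 1, \; |v| < B u^{\gamma}\}$ is finite. -/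
/-! Since `u ≤ |(u, v)|`, the integrand is at most `u⁻³`, and the fibre of the region over `u`
has length `2 B u^γ`. Integrating over the fibres first leaves `∫₀¹ 2 B u^(γ-3) du`, which is
finite because `γ - 3 > -1`. -/

open MeasureTheory Set

theorem setLIntegral_regionBetween_comp_fst {α : Type*} [MeasurableSpace α] {μ : Measure α}
    [SFinite μ] {f g : α → ℝ} {s : Set α} (hf : Measurable f) (hg : Measurable g)
    (hs : MeasurableSet s) {F : α → ENNReal} (hF : Measurable F) :
    ∫⁻ p in regionBetween f g s, F p.1 ∂μ.prod volume =
      ∫⁻ x in s, F x * ENNReal.ofReal (g x - f x) ∂μ := by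
  rw [← withDensity_apply _ (measurableSet_regionBetween hf hg hs), ← prod_withDensity_left hF,
    volume_regionBetween_eq_lintegral' hf hg hs,
    setLIntegral_withDensity_eq_setLIntegral_mul _ hF (by fun_prop) hs]
  rfl

theorem Real.rpow_sq_add_sq_le {u : ℝ} (v : ℝ) (hu : 0 < u) {r : ℝ} (hr : r ≤ 0) :
    (u ^ 2 + v ^ 2) ^ r ≤ u ^ (2 * r) := by
  rw [Real.rpow_mul hu.le, Real.rpow_two]
  exact Real.rpow_le_rpow_of_nonpos (by positivity) (le_add_of_nonneg_right (sq_nonneg v)) hr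

theorem stmt11_general (B γ : ℝ) (hγ : 2 < γ) :
    (∫⁻ p in {p : ℝ × ℝ | 0 < p.1 ∧ p.1 < 1 ∧ |p.2| < B * p.1 ^ γ},
        ENNReal.ofReal ((p.1 ^ 2 + p.2 ^ 2) ^ (-(3 : ℝ) / 2)) ∂volume) < ⊤ := by
  set h : ℝ → ℝ := fun u ↦ B * u ^ γ
  have hh : Measurable h := by fun_prop
  have hU : {p : ℝ × ℝ | 0 < p.1 ∧ p.1 < 1 ∧ |p.2| < B * p.1 ^ γ} =
      regionBetween (-h) h (Ioo 0 1) := by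
    ext p
    simp [regionBetween, h, abs_lt, and_assoc]
  rw [hU]
  calc _ ≤ ∫⁻ p in regionBetween (-h) h (Ioo 0 1), ENNReal.ofReal (p.1 ^ (-3 : ℝ)) :=
        setLIntegral_mono' (measurableSet_regionBetween hh.neg hh measurableSet_Ioo)
          fun p hp ↦ ENNReal.ofReal_le_ofReal <| by
            convert Real.rpow_sq_add_sq_le p.2 hp.1.1 (by norm_num : -(3 : ℝ) / 2 ≤ 0) using 2
            norm_num
    _ = ∫⁻ u in Ioo 0 1, ENNReal.ofReal (u ^ (-3 : ℝ)) * ENNReal.ofReal (h u - (-h) u) := by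
        rw [Measure.volume_eq_prod]
        exact setLIntegral_regionBetween_comp_fst hh.neg hh measurableSet_Ioo
          (by fun_prop : Measurable fun u : ℝ ↦ ENNReal.ofReal (u ^ (-3 : ℝ)))
    _ = ∫⁻ u in Ioo 0 1, ENNReal.ofReal (2 * B * u ^ (γ - 3)) := by
        refine setLIntegral_congr_fun measurableSet_Ioo fun u hu ↦ ?_
        rw [← ENNReal.ofReal_mul (Real.rpow_nonneg hu.1.le _), Real.rpow_sub hu.1,
          Real.rpow_neg hu.1.le]
        simp only [h, Pi.neg_apply]
        ring_nf
    _ < ⊤ :=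
        (((intervalIntegral.integrableOn_Ioo_rpow_iff zero_lt_one).2 (by linarith)).const_mul
          (2 * B)).lintegral_lt_top

/-- For `B ≥ 0` and `γ > 2`, the integral of `(u²+v²)^{-3/2}` over the cusp-shaped region
`{0 < u < 1, |v| < B·u^γ}` is finite. -/
theorem stmt11 (B γ : ℝ) (hB : 0 ≤ B) (hγ : 2 < γ) :
    (∫⁻ p in {p : ℝ × ℝ | 0 < p.1 ∧ p.1 < 1 ∧ |p.2| < B * p.1 ^ γ},
        ENNReal.ofReal ((p.1 ^ 2 + p.2 ^ 2) ^ (-(3 : ℝ) / 2)) ∂volume) < ⊤ :=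
  stmt11_general B γ hγ
end

section
/- Let $\Omega \subset \mathbb{C}$ be an open set invariant under a holomorphic map $f$ ($f(\Omega) = \Omega$, $f$ injective on $\Omega$), conformally equivalent to an annulus via $\psi : \{1 < |w| < r\} \to \Omega$ with $f \circ \psi(w) = \psi(\lambda w)$ for an irrational rotation $\lambda$ (unimodular, not a root of unity). Let $L = \bigcap_{1 < r' < r} \overline{\psi(\{1 < |w| < r'\})}$ be the inner boundary component, and suppose $f$ extends holomorphically to a neighborhood $U$ of the compact set $L$ with $|f'(z)| > 2$ for all $z \in U$. Then a contradiction follows; i.e., $f$ cannot satisfy $|f'| > 2$ on any neighborhood of a boundary component of an invariant Herman ring. -/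
open Set Function Metric Filter Topology

/-!
Near the inner boundary component `L` of the ring there is a whole circle `|w| = s` whose image
under `ψ` lies in the neighbourhood `U` of `L` (compactness of the nested closures). On that
circle, differentiating `f (ψ w) = ψ (l w)` gives `|ψ'(l w)| = |f'(ψ w)| |ψ' w| ≥ 2 |ψ' w|`.
Since `|l| = 1` the rotation preserves the circle, so iterating shows `|ψ'|` would grow like `2ⁿ`
on the circle, where it is bounded; hence `ψ' = 0` on the circle, so `ψ` is constant along it,
contradicting injectivity.
-/

theorem exists_mapsTo_sphere_of_biInter_closure_subset {E : Type*} [MetricSpace E] [ProperSpace E]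
    {r : ℝ} (hr : 1 < r) {ψ : ℂ → E}
    (hbdd : Bornology.IsBounded (ψ '' {w : ℂ | 1 < ‖w‖ ∧ ‖w‖ < r}))
    {U : Set E} (hU : IsOpen U)
    (hLU : ⋂ r' ∈ Ioo (1 : ℝ) r, closure (ψ '' {w : ℂ | 1 < ‖w‖ ∧ ‖w‖ < r'}) ⊆ U) :
    ∃ s, 1 < s ∧ s < r ∧ MapsTo ψ (sphere 0 s) U := by
  set V : Ioo (1 : ℝ) r → Set E := fun r' => closure (ψ '' {w : ℂ | 1 < ‖w‖ ∧ ‖w‖ < r'})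
  have hV_mono : Monotone V := fun a b hab =>
    closure_mono (image_mono fun w hw => ⟨hw.1, hw.2.trans_le hab⟩)
  have : Nonempty (Ioo (1 : ℝ) r) := ⟨⟨(1 + r) / 2, by constructor <;> linarith⟩⟩
  have hV_cpct (i : Ioo (1 : ℝ) r) : IsCompact (V i) :=
    (hbdd.subset (image_mono fun w hw => ⟨hw.1, hw.2.trans i.2.2⟩)).isCompact_closure
  obtain ⟨⟨r', hr'1, hr'r⟩, hVU⟩ := exists_subset_nhds_of_isCompact hV_mono.directed_ge hV_cpct
    (U := U) fun x hx => hU.mem_nhds (hLU (by rwa [biInter_eq_iInter]))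
  refine ⟨(1 + r') / 2, by linarith, by linarith, fun w hw => hVU (subset_closure ?_)⟩
  rw [mem_sphere_zero_iff_norm] at hw
  exact mem_image_of_mem ψ ⟨by linarith, by linarith⟩

theorem deriv_mul_deriv_eq_of_eventually_comp_eq {f ψ : ℂ → ℂ} {l w : ℂ}
    (hf : DifferentiableAt ℂ f (ψ w)) (hψ : DifferentiableAt ℂ ψ w)
    (hψl : DifferentiableAt ℂ ψ (l * w)) (hconj : ∀ᶠ z in 𝓝 w, f (ψ z) = ψ (l * z)) :
    deriv f (ψ w) * deriv ψ w = l * deriv ψ (l * w) := by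
  have hlhs : HasDerivAt (fun z => f (ψ z)) (deriv f (ψ w) * deriv ψ w) w :=
    hf.hasDerivAt.comp w hψ.hasDerivAt
  have hrhs : HasDerivAt (fun z => ψ (l * z)) (deriv ψ (l * w) * l) w :=
    hψl.hasDerivAt.comp w ((hasDerivAt_id w).const_mul l |>.congr_deriv (mul_one l))
  rw [hlhs.unique (hrhs.congr_of_eventuallyEq hconj), mul_comm]

theorem eqOn_zero_of_bounded_of_expanding {X E : Type*} [NormedAddCommGroup E] {S : Set X}
    {T : X → X} (hT : MapsTo T S S) {g : X → E} {B K : ℝ} (hK : 1 < K)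
    (hB : ∀ x ∈ S, ‖g x‖ ≤ B) (hexp : ∀ x ∈ S, K * ‖g x‖ ≤ ‖g (T x)‖) : EqOn g 0 S := by
  intro x hx
  have hiter : ∀ n : ℕ, K ^ n * ‖g x‖ ≤ ‖g (T^[n] x)‖ := by
    intro n
    induction n with
    | zero => simp
    | succ n ih =>
      calc K ^ (n + 1) * ‖g x‖ = K * (K ^ n * ‖g x‖) := by ring
        _ ≤ K * ‖g (T^[n] x)‖ := by gcongr
        _ ≤ ‖g (T^[n + 1] x)‖ := by
          rw [iterate_succ_apply']; exact hexp _ (hT.iterate n hx)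
  by_contra hne
  have hpos : 0 < ‖g x‖ := norm_pos_iff.mpr hne
  obtain ⟨n, hn⟩ := pow_unbounded_of_one_lt (B / ‖g x‖) hK
  rw [div_lt_iff₀ hpos] at hn
  linarith [hiter n, hB _ (hT.iterate n hx)]

theorem apply_neg_eq_of_hasDerivAt_zero_on_sphere {ψ : ℂ → ℂ} {s : ℝ} (hs : 0 ≤ s)
    (hψ : ∀ w ∈ sphere (0 : ℂ) s, HasDerivAt ψ 0 w) : ψ (-s) = ψ s := by
  have hγ : ∀ τ, HasDerivAt (ψ ∘ circleMap 0 s) 0 τ := fun τ => by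
    simpa using (hψ _ (circleMap_mem_sphere 0 hs τ)).comp τ (hasDerivAt_circleMap 0 s τ)
  have := is_const_of_deriv_eq_zero (fun τ => (hγ τ).differentiableAt) (fun τ => (hγ τ).deriv)
    Real.pi 0
  simpa [circleMap] using this

theorem stmt16_general (r : ℝ) (hr : 1 < r) (ψ : ℂ → ℂ)
    (hψ : DifferentiableOn ℂ ψ {w : ℂ | 1 < ‖w‖ ∧ ‖w‖ < r})
    (hinj : InjOn ψ {w : ℂ | 1 < ‖w‖ ∧ ‖w‖ < r})
    (Ω : Set ℂ) (hΩ : Ω = ψ '' {w : ℂ | 1 < ‖w‖ ∧ ‖w‖ < r})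
    (hbdd : Bornology.IsBounded Ω)
    (f : ℂ → ℂ) (l : ℂ) (hl : ‖l‖ = 1)
    (hconj : ∀ w ∈ {w : ℂ | 1 < ‖w‖ ∧ ‖w‖ < r}, f (ψ w) = ψ (l * w))
    (L : Set ℂ)
    (hL : L = ⋂ r' ∈ Ioo (1 : ℝ) r, closure (ψ '' {w : ℂ | 1 < ‖w‖ ∧ ‖w‖ < r'}))
    (U : Set ℂ) (hU : IsOpen U) (hLU : L ⊆ U)
    (hf : DifferentiableOn ℂ f U)
    (hexp : ∀ z ∈ U, 2 < ‖deriv f z‖) :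
    False := by
  set A := {w : ℂ | 1 < ‖w‖ ∧ ‖w‖ < r}
  obtain ⟨s, hs1, hsr, hsU⟩ :=
    exists_mapsTo_sphere_of_biInter_closure_subset hr (hΩ ▸ hbdd) hU (hL ▸ hLU)
  have hA : IsOpen A := (isOpen_lt continuous_const continuous_norm).inter
    (isOpen_lt continuous_norm continuous_const)
  have hSA : sphere 0 s ⊆ A := fun w hw => by
    rw [mem_sphere_zero_iff_norm] at hw; exact ⟨hw ▸ hs1, hw ▸ hsr⟩
  have hψA : ∀ w ∈ A, DifferentiableAt ℂ ψ w := fun w hw => hψ.differentiableAt (hA.mem_nhds hw)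
  have hlS : MapsTo (l * ·) (sphere 0 s) (sphere 0 s) := fun w hw => by
    simpa [norm_mul, hl] using hw
  obtain ⟨B, hB⟩ := (isCompact_sphere 0 s).exists_bound_of_continuousOn
    (((hψ.analyticOnNhd hA).deriv.continuousOn).mono hSA)
  have hexpand : ∀ w ∈ sphere 0 s, 2 * ‖deriv ψ w‖ ≤ ‖deriv ψ (l * w)‖ := fun w hw => by
    calc 2 * ‖deriv ψ w‖ ≤ ‖deriv f (ψ w)‖ * ‖deriv ψ w‖ := by gcongr; exact (hexp _ (hsU hw)).le
      _ = ‖deriv ψ (l * w)‖ := by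
        rw [← norm_mul, deriv_mul_deriv_eq_of_eventually_comp_eq
          (hf.differentiableAt (hU.mem_nhds (hsU hw))) (hψA w (hSA hw)) (hψA _ (hSA (hlS hw)))
          (eventually_of_mem (hA.mem_nhds (hSA hw)) hconj), norm_mul, hl, one_mul]
  have hψ'_zero := eqOn_zero_of_bounded_of_expanding hlS one_lt_two hB hexpand
  have hs0 : 0 < s := by linarith
  have hψ_sym := apply_neg_eq_of_hasDerivAt_zero_on_sphere hs0.le fun w hw =>
    hψ'_zero hw ▸ (hψA w (hSA hw)).hasDerivAt
  have hneg_eq := hinj (hSA (by simp [abs_of_pos hs0])) (hSA (by simp [abs_of_pos hs0])) hψ_sym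
  exact hs0.ne' (Complex.ofReal_eq_zero.mp (neg_eq_self.mp hneg_eq))

/-- A boundary component of an invariant Herman ring cannot be expanding.  Suppose
`ψ : {1 < |w| < r} → Ω` is a conformal homeomorphism onto a bounded invariant domain of a
holomorphic map `f` with `f ∘ ψ(w) = ψ(l·w)` for an irrational rotation `l` (unimodular,
not a root of unity), let `L = ⋂_{1<r'<r} closure(ψ({1 < |w| < r'}))` be the inner boundary
component, and suppose `f` is holomorphic on an open neighbourhood `U` of `L` with
`|f'| > 2` on `U`.  Then a contradiction follows. -/
theorem stmt16 (r : ℝ) (hr : 1 < r) (ψ : ℂ → ℂ)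
    (hψ : DifferentiableOn ℂ ψ {w : ℂ | 1 < ‖w‖ ∧ ‖w‖ < r})
    (hinj : InjOn ψ {w : ℂ | 1 < ‖w‖ ∧ ‖w‖ < r})
    (Ω : Set ℂ) (hΩ : Ω = ψ '' {w : ℂ | 1 < ‖w‖ ∧ ‖w‖ < r})
    (hbdd : Bornology.IsBounded Ω)
    (f : ℂ → ℂ) (l : ℂ) (hl : ‖l‖ = 1) (hroot : ∀ n : ℕ, 0 < n → l ^ n ≠ 1)
    (hconj : ∀ w ∈ {w : ℂ | 1 < ‖w‖ ∧ ‖w‖ < r}, f (ψ w) = ψ (l * w))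
    (L : Set ℂ)
    (hL : L = ⋂ r' ∈ Ioo (1 : ℝ) r, closure (ψ '' {w : ℂ | 1 < ‖w‖ ∧ ‖w‖ < r'}))
    (U : Set ℂ) (hU : IsOpen U) (hLU : L ⊆ U)
    (hf : DifferentiableOn ℂ f U)
    (hexp : ∀ z ∈ U, 2 < ‖deriv f z‖) :
    False :=
  stmt16_general r hr ψ hψ hinj Ω hΩ hbdd f l hl hconj L hL U hU hLU hf hexp
end
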